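/- arXiv:2009.05744 — 4 statements merged into one kernel-verified Lean document; each statement's English description precedes it below -/
import Mathlib

section
/- For every natural number n, C_n = \sum_{k=0}^{\lfloor n/2 \rfloor} \left( \binom{n}{k} - \binom{n}{k-1} \right)^2, where \binom{n}{-1} is interpreted as 0. -/
open Finset

private lemma sum_choose_sq (n : ℕ) :
    ∑ k ∈ range (n + 1), n.choose k * n.choose k = (2 * n).choose n := by
  rw [two_mul, Nat.add_choose_eq, Finset.Nat.sum_antidiagonal_eq_sum_range_succ
    (fun i j => n.choose i * n.choose j) n]
  refine Finset.sum_congr rfl fun k hk => ?_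
  rw [Nat.choose_symm (Nat.lt_succ_iff.mp (mem_range.mp hk))]

private lemma sum_choose_mul_pred (n : ℕ) :
    ∑ k ∈ range (n + 2), n.choose k * (if k = 0 then 0 else n.choose (k - 1)) =
      (2 * n).choose (n + 1) := by
  rw [two_mul, Nat.add_choose_eq, Finset.Nat.sum_antidiagonal_eq_sum_range_succ
    (fun i j => n.choose i * n.choose j) (n + 1)]
  refine Finset.sum_congr rfl fun k hk => ?_
  rcases Nat.eq_zero_or_pos k with rfl | hkpos
  · simp [Nat.choose_succ_self]
  · have hk1 : k - 1 ≤ n := by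
      have := Nat.lt_succ_iff.mp (mem_range.mp hk)
      omega
    have : n + 1 - k = n - (k - 1) := by omega
    rw [if_neg (Nat.pos_iff_ne_zero.mp hkpos), this, Nat.choose_symm hk1]

private lemma gdef_reflect (n : ℕ) (k : ℕ) (hk : k ≤ n + 1) :
    ((n.choose (n + 1 - k) : ℤ) -
        if n + 1 - k = 0 then 0 else (n.choose (n + 1 - k - 1) : ℤ)) =
      -((n.choose k : ℤ) - if k = 0 then 0 else (n.choose (k - 1) : ℤ)) := by
  rcases Nat.eq_zero_or_pos k with rfl | hkpos
  · simp [Nat.choose_succ_self, Nat.choose_self]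
  rcases Nat.lt_or_ge k (n + 1) with hlt | hge
  · -- 1 ≤ k ≤ n
    have h1 : k ≤ n := by omega
    have h2 : n + 1 - k ≠ 0 := by omega
    rw [if_neg h2, if_neg (Nat.pos_iff_ne_zero.mp hkpos)]
    have e1 : n + 1 - k = n - (k - 1) := by omega
    have e2 : n + 1 - k - 1 = n - k := by omega
    rw [e2, e1, Nat.choose_symm h1, Nat.choose_symm (by omega : k - 1 ≤ n)]
    ring
  · -- k = n + 1
    have : k = n + 1 := le_antisymm hk hge
    subst this
    simp [Nat.choose_succ_self, Nat.choose_self]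

private lemma g_middle (n : ℕ) (hn : n % 2 = 1) :
    ((n.choose (n / 2 + 1) : ℤ) -
        if n / 2 + 1 = 0 then 0 else (n.choose (n / 2 + 1 - 1) : ℤ)) = 0 := by
  have h1 : n / 2 + 1 ≤ n := by omega
  have h2 : n - (n / 2 + 1) = n / 2 := by omega
  rw [if_neg (by omega)]
  rw [← Nat.choose_symm h1, h2]
  simp

/-- `C_n = ∑_{k=0}^{⌊n/2⌋} (C(n,k) - C(n,k-1))^2`, with `C(n,-1) = 0`. -/
theorem catalan_eq_sum_sq_binomial_diff (n : ℕ) :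
    (catalan n : ℤ) =
      ∑ k ∈ Finset.range (n / 2 + 1),
        ((n.choose k : ℤ) - if k = 0 then 0 else (n.choose (k - 1) : ℤ)) ^ 2 := by
  set g : ℕ → ℤ := fun k =>
    (n.choose k : ℤ) - if k = 0 then 0 else (n.choose (k - 1) : ℤ) with hg
  -- Step 1: the full sum equals 2 * (C(2n,n) - C(2n,n+1))
  have full : ∑ k ∈ range (n + 2), g k ^ 2 =
      2 * (((2 * n).choose n : ℤ) - ((2 * n).choose (n + 1) : ℤ)) := by
    have expand : ∀ k, g k ^ 2 =
        (n.choose k : ℤ) * (n.choose k : ℤ)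
          - 2 * ((n.choose k : ℤ) * (if k = 0 then 0 else (n.choose (k - 1) : ℤ)))
          + (if k = 0 then 0 else (n.choose (k - 1) : ℤ)) *
              (if k = 0 then 0 else (n.choose (k - 1) : ℤ)) := by
      intro k; rw [hg]; ring
    rw [Finset.sum_congr rfl fun k _ => expand k]
    rw [Finset.sum_add_distrib, Finset.sum_sub_distrib, ← Finset.mul_sum]
    have e1 : ∑ k ∈ range (n + 2), (n.choose k : ℤ) * (n.choose k : ℤ) =
        ((2 * n).choose n : ℤ) := by
      rw [Finset.sum_range_succ, Nat.choose_succ_self]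
      push_cast
      rw [← sum_choose_sq n]
      push_cast
      ring
    have e2 : ∑ k ∈ range (n + 2),
        (n.choose k : ℤ) * (if k = 0 then 0 else (n.choose (k - 1) : ℤ)) =
        ((2 * n).choose (n + 1) : ℤ) := by
      rw [← sum_choose_mul_pred n]
      push_cast
      refine Finset.sum_congr rfl fun k _ => ?_
      split <;> simp
    have e3 : ∑ k ∈ range (n + 2),
        (if k = 0 then 0 else (n.choose (k - 1) : ℤ)) *
          (if k = 0 then 0 else (n.choose (k - 1) : ℤ)) =
        ((2 * n).choose n : ℤ) := by
      rw [Finset.sum_range_succ']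
      simp only [if_neg (Nat.succ_ne_zero _), Nat.add_sub_cancel, if_pos rfl]
      rw [← sum_choose_sq n]
      push_cast
      ring
    rw [e1, e2, e3]; ring
  -- Step 2: the full sum is twice the half sum
  have half : ∑ k ∈ range (n + 2), g k ^ 2 = 2 * ∑ k ∈ range (n / 2 + 1), g k ^ 2 := by
    have hsplit : n + 2 = (n / 2 + 1) + (n + 1 - n / 2) := by omega
    rw [hsplit, Finset.sum_range_add]
    have refl2 : ∑ k ∈ range (n + 1 - n / 2), g (n / 2 + 1 + k) ^ 2 =
        ∑ k ∈ range (n + 1 - n / 2), g k ^ 2 := by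
      rw [← Finset.sum_range_reflect (fun k => g (n / 2 + 1 + k) ^ 2)]
      refine Finset.sum_congr rfl fun j hj => ?_
      have hj' : j < n + 1 - n / 2 := mem_range.mp hj
      have harg : n / 2 + 1 + (n + 1 - n / 2 - 1 - j) = n + 1 - j := by omega
      have hrefl : g (n + 1 - j) = - g j := by
        simp only [hg]; exact gdef_reflect n j (by omega)
      rw [harg, hrefl]; ring
    rw [refl2]
    rcases Nat.even_or_odd n with he | ho
    · have he' := Nat.even_iff.mp he
      have : n + 1 - n / 2 = n / 2 + 1 := by omega
      rw [this]; ring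
    · have ho' := Nat.odd_iff.mp ho
      have h1 : n + 1 - n / 2 = (n / 2 + 1) + 1 := by omega
      have hmid : g (n / 2 + 1) = 0 := by
        simp only [hg]; exact g_middle n ho'
      have h2 : ∑ k ∈ range (n + 1 - n / 2), g k ^ 2 = ∑ k ∈ range (n / 2 + 1), g k ^ 2 := by
        rw [h1, Finset.sum_range_succ, hmid]; ring
      rw [h2]; ring
  -- Step 3: catalan n = C(2n,n) - C(2n,n+1)
  have hcat : ((n : ℤ) + 1) * (catalan n : ℤ) = ((n : ℤ) + 1) *
      (((2 * n).choose n : ℤ) - ((2 * n).choose (n + 1) : ℤ)) := by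
    have h1 : (n + 1) * catalan n = n.centralBinom := succ_mul_catalan_eq_centralBinom n
    have h2 : n.centralBinom = (2 * n).choose n := Nat.centralBinom_eq_two_mul_choose n
    have h3 : (2 * n).choose (n + 1) * (n + 1) = (2 * n).choose n * n := by
      have := Nat.choose_succ_right_eq (2 * n) n
      rwa [show 2 * n - n = n by omega] at this
    have h1' : ((n : ℤ) + 1) * (catalan n : ℤ) = ((2 * n).choose n : ℤ) := by
      exact_mod_cast congrArg (Nat.cast : ℕ → ℤ) (h1.trans h2)
    have h3' : ((2 * n).choose (n + 1) : ℤ) * ((n : ℤ) + 1) =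
        ((2 * n).choose n : ℤ) * (n : ℤ) := by exact_mod_cast congrArg (Nat.cast : ℕ → ℤ) h3
    rw [h1']
    linarith [h3']
  have hc : (catalan n : ℤ) = ((2 * n).choose n : ℤ) - ((2 * n).choose (n + 1) : ℤ) := by
    have hne : ((n : ℤ) + 1) ≠ 0 := by positivity
    exact mul_left_cancel₀ hne hcat
  have := full.symm.trans half
  rw [hc]
  linarith [this]
end

section
/- For all natural numbers n and all i with 0 \leq i \leq 2n, the n-th Catalan number equals the sum over all heights j of the product d(i,j) \cdot d(2n-i, j): C_n = \sum_{j=0}^{2n} d(i,j) \cdot d(2n-i, j). -/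
/-- `d i j` counts sequences `s : Fin i → ℤ` of steps `±1` whose partial sums are all
nonnegative and whose total sum is `j` (prefixes of Dyck paths ending at node `(i, j)`). -/
noncomputable def d (i j : ℕ) : ℕ :=
  Nat.card {s : Fin i → ℤ //
    (∀ m, s m = 1 ∨ s m = -1) ∧
    (∀ m : Fin i, 0 ≤ ∑ r ∈ Finset.univ.filter (· ≤ m), s r) ∧
    (∑ r, s r) = (j : ℤ)}


def D : ℕ → ℕ → ℕ
  | 0, 0 => 1
  | 0, _+1 => 0
  | i+1, 0 => D i 1
  | i+1, j+1 => D i j + D i (j+2)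

lemma D_eq_zero : ∀ i j : ℕ, i < j → D i j = 0 := by
  intro i
  induction i with
  | zero => intro j hj; match j, hj with | j+1, _ => rfl
  | succ i ih =>
    intro j hj
    match j, hj with
    | j+1, hj => show D i j + D i (j+2) = 0; rw [ih j (by omega), ih (j+2) (by omega)]

noncomputable def ich (i : ℕ) (z : ℤ) : ℤ := if 0 ≤ z then (i.choose z.toNat : ℤ) else 0

lemma ich_pascal (i : ℕ) (z : ℤ) : ich (i+1) z = ich i z + ich i (z-1) := by
  unfold ich
  rcases lt_trichotomy z 0 with h | h | h
  · rw [if_neg (by omega), if_neg (by omega), if_neg (by omega)]; ring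
  · subst h; norm_num
  · rw [if_pos (by omega), if_pos (by omega), if_pos (by omega)]
    have h1 : z.toNat = (z-1).toNat + 1 := by omega
    rw [h1, Nat.choose_succ_succ]
    push_cast; ring

lemma ich_symm (i : ℕ) (z : ℤ) (h0 : 0 ≤ z) (h1 : z ≤ i) : ich i z = ich i (i - z) := by
  unfold ich
  rw [if_pos h0, if_pos (by omega)]
  have : ((i:ℤ) - z).toNat = i - z.toNat := by omega
  rw [this, Nat.choose_symm (by omega)]

lemma Dich : ∀ i j b : ℕ, i = j + 2*b → (D i j : ℤ) = ich i b - ich i ((b:ℤ)-1) := by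
  intro i
  induction i with
  | zero =>
    intro j b h
    obtain ⟨rfl, rfl⟩ : j = 0 ∧ b = 0 := by omega
    simp [D, ich]
  | succ i ih =>
    intro j b h
    match j with
    | 0 =>
      obtain ⟨b', rfl⟩ : ∃ b', b = b' + 1 := ⟨b - 1, by omega⟩
      have hD : D (i+1) 0 = D i 1 := rfl
      rw [hD, ih 1 b' (by omega)]
      rw [ich_pascal, ich_pascal]
      have hsym : ich i ((b':ℤ)+1) = ich i b' := by
        rw [ich_symm i ((b':ℤ)+1) (by positivity) (by push_cast; omega)]
        congr 1; push_cast; omega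
      push_cast
      push_cast at hsym
      rw [show ((b':ℤ) + 1 - 1) = (b':ℤ) by ring, hsym]
      ring
    | j'+1 =>
      have hD : D (i+1) (j'+1) = D i j' + D i (j'+2) := rfl
      rw [hD]
      match b with
      | 0 =>
        have h2 : D i (j'+2) = 0 := D_eq_zero i (j'+2) (by omega)
        push_cast [h2, ih j' 0 (by omega)]
        rw [ich_pascal]
        simp [ich]
      | b'+1 =>
        push_cast [ih j' (b'+1) (by omega), ih (j'+2) b' (by omega)]
        rw [ich_pascal, ich_pascal]
        push_cast
        ring


open Finset

def P (i : ℕ) (j : ℤ) (s : Fin i → ℤ) : Prop :=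
  (∀ m, s m = 1 ∨ s m = -1) ∧
  (∀ m : Fin i, 0 ≤ ∑ r ∈ Finset.univ.filter (· ≤ m), s r) ∧
  (∑ r, s r) = j

noncomputable def e (i : ℕ) (j : ℤ) : ℕ := Nat.card {s : Fin i → ℤ // P i j s}

instance (i : ℕ) (j : ℤ) : Finite {s : Fin i → ℤ // P i j s} := by
  apply Finite.of_injective (fun s : {s : Fin i → ℤ // P i j s} =>
    (fun m => decide (s.1 m = 1) : Fin i → Bool))
  rintro ⟨s, hs⟩ ⟨t, ht⟩ h
  simp only [Subtype.mk.injEq]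
  funext m
  have h' := congrFun h m
  simp only [decide_eq_decide] at h'
  rcases hs.1 m with h1 | h1 <;> rcases ht.1 m with h2 | h2 <;> rw [h1, h2] <;>
    simp [h1, h2] at h'

lemma filter_le_last (i : ℕ) : (Finset.univ.filter (· ≤ Fin.last i)) = Finset.univ :=
  Finset.filter_true_of_mem fun r _ => Fin.le_last r

lemma e_neg (i : ℕ) (j : ℤ) (hj : j < 0) : e i j = 0 := by
  have : IsEmpty {s : Fin i → ℤ // P i j s} := by
    constructor
    rintro ⟨s, h1, h2, h3⟩
    match i with
    | 0 => simp at h3; omega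
    | i+1 =>
      have := h2 (Fin.last i)
      rw [filter_le_last, h3] at this
      omega
  exact Nat.card_of_isEmpty

lemma filter_le_castSucc {i : ℕ} (s : Fin (i+1) → ℤ) (m : Fin i) :
    ∑ r ∈ Finset.univ.filter (· ≤ m.castSucc), s r
      = ∑ r ∈ Finset.univ.filter (· ≤ m), s r.castSucc := by
  rw [Finset.sum_filter, Finset.sum_filter, Fin.sum_univ_castSucc]
  simp [Fin.castSucc_le_castSucc_iff, (Fin.castSucc_lt_last m).not_ge]

def recEquiv (i : ℕ) (j : ℤ) (hj : 0 ≤ j) :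
    {s : Fin (i+1) → ℤ // P (i+1) j s} ≃
      {t : Fin i → ℤ // P i (j-1) t} ⊕ {t : Fin i → ℤ // P i (j+1) t} where
  toFun := fun ⟨s, hs⟩ =>
    if h : s (Fin.last i) = 1 then
      Sum.inl ⟨fun m => s m.castSucc, by
        refine ⟨fun m => hs.1 _, fun m => ?_, ?_⟩
        · have := hs.2.1 m.castSucc
          rwa [filter_le_castSucc] at this
        · have := hs.2.2
          rw [Fin.sum_univ_castSucc, h] at this
          show (∑ r : Fin i, s r.castSucc) = j - 1
          omega⟩
    else
      Sum.inr ⟨fun m => s m.castSucc, by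
        have h' : s (Fin.last i) = -1 := (hs.1 _).resolve_left h
        refine ⟨fun m => hs.1 _, fun m => ?_, ?_⟩
        · have := hs.2.1 m.castSucc
          rwa [filter_le_castSucc] at this
        · have := hs.2.2
          rw [Fin.sum_univ_castSucc, h'] at this
          show (∑ r : Fin i, s r.castSucc) = j + 1
          omega⟩
  invFun := fun x =>
    match x with
    | .inl ⟨t, ht⟩ => ⟨Fin.snoc t 1, by
        refine ⟨fun m => ?_, fun m => ?_, ?_⟩
        · refine Fin.lastCases ?_ (fun m' => ?_) m
          · left; simp
          · rw [Fin.snoc_castSucc]; exact ht.1 m'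
        · refine Fin.lastCases ?_ (fun m' => ?_) m
          · rw [filter_le_last, Fin.sum_univ_castSucc]
            simp only [Fin.snoc_castSucc, Fin.snoc_last]
            rw [ht.2.2]; omega
          · rw [filter_le_castSucc]
            simp only [Fin.snoc_castSucc]
            exact ht.2.1 m'
        · rw [Fin.sum_univ_castSucc]
          simp only [Fin.snoc_castSucc, Fin.snoc_last]
          rw [ht.2.2]; ring⟩
    | .inr ⟨t, ht⟩ => ⟨Fin.snoc t (-1), by
        refine ⟨fun m => ?_, fun m => ?_, ?_⟩
        · refine Fin.lastCases ?_ (fun m' => ?_) m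
          · right; simp
          · rw [Fin.snoc_castSucc]; exact ht.1 m'
        · refine Fin.lastCases ?_ (fun m' => ?_) m
          · rw [filter_le_last, Fin.sum_univ_castSucc]
            simp only [Fin.snoc_castSucc, Fin.snoc_last]
            rw [ht.2.2]; omega
          · rw [filter_le_castSucc]
            simp only [Fin.snoc_castSucc]
            exact ht.2.1 m'
        · rw [Fin.sum_univ_castSucc]
          simp only [Fin.snoc_castSucc, Fin.snoc_last]
          rw [ht.2.2]; ring⟩
  left_inv := by
    rintro ⟨s, hs⟩
    by_cases h : s (Fin.last i) = 1
    · simp only [dif_pos h]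
      apply Subtype.ext
      simp only
      rw [show (1:ℤ) = s (Fin.last i) from h.symm]
      exact Fin.snoc_init_self s
    · simp only [dif_neg h]
      apply Subtype.ext
      simp only
      have h' : s (Fin.last i) = -1 := (hs.1 _).resolve_left h
      rw [show (-1:ℤ) = s (Fin.last i) from h'.symm]
      exact Fin.snoc_init_self s
  right_inv := by
    rintro (⟨t, ht⟩ | ⟨t, ht⟩)
    · simp only
      rw [dif_pos (by simp : (Fin.snoc t 1 : Fin (i+1) → ℤ) (Fin.last i) = 1)]
      congr 1
      apply Subtype.ext
      funext m
      simp
    · have : ¬ ((Fin.snoc t (-1) : Fin (i+1) → ℤ) (Fin.last i) = 1) := by simp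
      simp only [dif_neg this]
      congr 1
      apply Subtype.ext
      funext m
      simp

lemma e_rec (i : ℕ) (j : ℤ) (hj : 0 ≤ j) : e (i+1) j = e i (j-1) + e i (j+1) := by
  rw [e, Nat.card_congr (recEquiv i j hj), Nat.card_sum]
  rfl

lemma e_zero_zero : e 0 0 = 1 := by
  have : Unique {s : Fin 0 → ℤ // P 0 0 s} := by
    refine ⟨⟨⟨fun m => m.elim0, ?_, ?_, ?_⟩⟩, ?_⟩
    · exact fun m => m.elim0
    · exact fun m => m.elim0
    · simp
    · rintro ⟨s, hs⟩
      apply Subtype.ext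
      funext m
      exact m.elim0
  exact Nat.card_unique

lemma e_zero_succ (j : ℕ) : e 0 (j+1 : ℕ) = 0 := by
  have : IsEmpty {s : Fin 0 → ℤ // P 0 ((j+1:ℕ):ℤ) s} := by
    constructor
    rintro ⟨s, _, _, h3⟩
    simp at h3
    omega
  exact Nat.card_of_isEmpty

lemma eD : ∀ i (j : ℕ), e i (j : ℤ) = D i j := by
  intro i
  induction i with
  | zero =>
    intro j
    match j with
    | 0 => exact e_zero_zero
    | j+1 => exact e_zero_succ j
  | succ i ih =>
    intro j
    match j with
    | 0 =>
      rw [show ((0:ℕ):ℤ) = 0 by norm_num, e_rec i 0 le_rfl,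
        e_neg i (0-1) (by norm_num)]
      have := ih 1
      push_cast at this ⊢
      rw [this]
      show 0 + D i 1 = D i 1
      omega
    | j+1 =>
      rw [e_rec i ((j+1:ℕ):ℤ) (by positivity)]
      have h1 : ((j+1:ℕ):ℤ) - 1 = ((j:ℕ):ℤ) := by push_cast; ring
      have h2 : ((j+1:ℕ):ℤ) + 1 = ((j+2:ℕ):ℤ) := by push_cast; ring
      rw [h1, h2, ih j, ih (j+2)]
      rfl

lemma D_catalan (n : ℕ) : D (2*n) 0 = catalan n := by
  have h := Dich (2*n) 0 n (by omega)
  unfold ich at h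
  match n with
  | 0 => simpa using h
  | m+1 =>
    set n := m + 1
    rw [if_pos (by positivity), if_pos (by push_cast; omega)] at h
    have ht1 : ((n:ℤ)).toNat = n := by omega
    have ht2 : ((n:ℤ)-1).toNat = n - 1 := by omega
    rw [ht1, ht2] at h
    -- key binomial identity
    have key : (n+1) * (2*n).choose (n-1) = n * (2*n).choose n := by
      have hsymm : (2*n).choose (n-1) = (2*n).choose (n+1) := by
        rw [← Nat.choose_symm (by omega : n+1 ≤ 2*n)]
        congr 1; omega
      have := Nat.choose_succ_right_eq (2*n) n
      rw [hsymm]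
      rw [show 2*n - n = n by omega] at this
      rw [mul_comm (n+1), mul_comm n]
      exact this
    have hcb : (n + 1) * catalan n = (2*n).choose n := by
      have := succ_mul_catalan_eq_centralBinom n
      rwa [Nat.centralBinom] at this
    have hle : (2*n).choose (n-1) ≤ (2*n).choose n := by
      nlinarith [Nat.choose_pos (show n ≤ 2*n by omega)]
    have hz : ((n:ℤ)+1) * (D (2*n) 0 : ℤ) = ((n:ℤ)+1) * (catalan n : ℤ) := by
      rw [h]
      have k' : ((n:ℤ)+1) * ((2*n).choose (n-1) : ℤ) = (n:ℤ) * ((2*n).choose n : ℤ) := by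
        exact_mod_cast congrArg (Nat.cast : ℕ → ℤ) key
      have c' : ((n:ℤ) + 1) * (catalan n : ℤ) = ((2*n).choose n : ℤ) := by
        exact_mod_cast congrArg (Nat.cast : ℕ → ℤ) hcb
      linarith
    have := mul_left_cancel₀ (show ((n:ℤ)+1) ≠ 0 by positivity) hz
    exact_mod_cast this

open Finset in
lemma key_step (i m N : ℕ) (hi : i < N) (hm : m < N) :
    ∑ j ∈ range (N+1), D (i+1) j * D m j = ∑ j ∈ range (N+1), D i j * D (m+1) j := by
  have hL : ∀ j, D (i+1) (j+1) = D i j + D i (j+2) := fun j => rfl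
  have hR : ∀ j, D (m+1) (j+1) = D m j + D m (j+2) := fun j => rfl
  rw [Finset.sum_range_succ' (fun j => D (i+1) j * D m j) N,
      Finset.sum_range_succ' (fun j => D i j * D (m+1) j) N]
  simp only [hL, hR, add_mul, mul_add, Finset.sum_add_distrib]
  have e1 : ∑ j ∈ range N, D i (j+2) * D m (j+1) + D (i+1) 0 * D m 0
      = ∑ j ∈ range (N+1), D i (j+1) * D m j := by
    rw [Finset.sum_range_succ' (fun j => D i (j+1) * D m j) N]
    rfl
  have e2 : ∑ j ∈ range N, D i (j+1) * D m (j+2) + D i 0 * D (m+1) 0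
      = ∑ j ∈ range (N+1), D i j * D m (j+1) := by
    rw [Finset.sum_range_succ' (fun j => D i j * D m (j+1)) N]
    rfl
  have e3 : ∑ j ∈ range (N+1), D i (j+1) * D m j
      = ∑ j ∈ range N, D i (j+1) * D m j := by
    rw [Finset.sum_range_succ, D_eq_zero i (N+1) (by omega)]
    simp
  have e4 : ∑ j ∈ range (N+1), D i j * D m (j+1)
      = ∑ j ∈ range N, D i j * D m (j+1) := by
    rw [Finset.sum_range_succ, D_eq_zero m (N+1) (by omega)]
    simp
  omega

open Finset in
lemma sumD (n : ℕ) : ∀ i, i ≤ 2*n → ∑ j ∈ range (2*n+1), D i j * D (2*n-i) j = catalan n := by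
  intro i
  induction i with
  | zero =>
    intro _
    rw [Finset.sum_eq_single 0]
    · simpa [D] using D_catalan n
    · intro j _ hj
      match j, hj with
      | j+1, _ => simp [show D 0 (j+1) = 0 from rfl]
    · simp
  | succ i ih =>
    intro hi
    have h1 : 2*n - i = (2*n - (i+1)) + 1 := by omega
    rw [key_step i (2*n-(i+1)) (2*n) (by omega) (by omega), ← h1]
    exact ih (by omega)

lemma d_eq_e (i j : ℕ) : d i j = e i j := rfl

/-- For any `0 ≤ i ≤ 2n`, the `n`-th Catalan number is the sum over all heights `j`
of `d(i, j) * d(2n - i, j)`. -/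
theorem catalan_eq_sum_prod_column (n i : ℕ) (hi : i ≤ 2 * n) :
    catalan n = ∑ j ∈ Finset.range (2 * n + 1), d i j * d (2 * n - i) j := by
  have : ∀ j, d i j * d (2 * n - i) j = D i j * D (2 * n - i) j := by
    intro j
    rw [d_eq_e, d_eq_e, eD, eD]
  simp only [this]
  exact (sumD n i hi).symm
end

section
/- For natural numbers i, j, k with j \leq i and i + j = 2(i - k) (i.e. k = (i-j)/2), the label of the Dyck triangle satisfies d(i,j) = \binom{i}{k} - \binom{i}{k-1}, where \binom{i}{-1} is interpreted as 0. -/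
def dstp (b : Bool) : ℤ := if b then 1 else -1

def DyckT {i : ℕ} (f : Fin i → Bool) : ℤ := ∑ r, dstp (f r)

def DyckP {i : ℕ} (f : Fin i → Bool) (m : Fin i) : ℤ :=
  ∑ r ∈ Finset.univ.filter (· ≤ m), dstp (f r)

def DyckS (i : ℕ) (j : ℤ) : Finset (Fin i → Bool) :=
  Finset.univ.filter (fun f => (∀ m, 0 ≤ DyckP f m) ∧ DyckT f = j)

lemma mem_DyckS {i : ℕ} {j : ℤ} {f : Fin i → Bool} :
    f ∈ DyckS i j ↔ (∀ m, 0 ≤ DyckP f m) ∧ DyckT f = j := by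
  simp [DyckS]

lemma DyckT_snoc {i : ℕ} (f : Fin i → Bool) (b : Bool) :
    DyckT (Fin.snoc f b) = DyckT f + dstp b := by
  simp [DyckT, Fin.sum_univ_castSucc]

lemma DyckP_snoc_castSucc {i : ℕ} (f : Fin i → Bool) (b : Bool) (m : Fin i) :
    DyckP (Fin.snoc f b) m.castSucc = DyckP f m := by
  unfold DyckP
  rw [Finset.sum_filter, Finset.sum_filter, Fin.sum_univ_castSucc]
  have hlast : ¬ (Fin.last i ≤ m.castSucc) := by
    exact not_le.mpr (Fin.castSucc_lt_last m)
  simp [hlast, Fin.castSucc_le_castSucc_iff]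

lemma DyckP_snoc_last {i : ℕ} (f : Fin i → Bool) (b : Bool) :
    DyckP (Fin.snoc f b) (Fin.last i) = DyckT (Fin.snoc f b) := by
  unfold DyckP DyckT
  congr 1
  apply Finset.filter_true_of_mem
  intro x _
  exact Fin.le_last x

lemma mem_DyckS_succ {i : ℕ} {j : ℤ} (hj : 0 ≤ j) (f : Fin i → Bool) (b : Bool) :
    Fin.snoc f b ∈ DyckS (i+1) j ↔ f ∈ DyckS i (j - dstp b) := by
  rw [mem_DyckS, mem_DyckS, DyckT_snoc]
  constructor
  · rintro ⟨h1, h2⟩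
    exact ⟨fun m => by simpa [DyckP_snoc_castSucc] using h1 m.castSucc, by omega⟩
  · rintro ⟨h1, h2⟩
    refine ⟨fun m => ?_, by omega⟩
    cases m using Fin.lastCases with
    | last => rw [DyckP_snoc_last, DyckT_snoc]; omega
    | cast m => rw [DyckP_snoc_castSucc]; exact h1 m

lemma card_DyckS_succ (i : ℕ) {j : ℤ} (hj : 0 ≤ j) :
    (DyckS (i+1) j).card = (DyckS i (j-1)).card + (DyckS i (j+1)).card := by
  have hdisj : Disjoint (DyckS i (j-1)) (DyckS i (j+1)) := by
    rw [Finset.disjoint_left]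
    intro f h1 h2
    rw [mem_DyckS] at h1 h2
    omega
  rw [← Finset.card_union_of_disjoint hdisj]
  apply Finset.card_bij (fun g _ => Fin.init g)
  · intro g hg
    have h := (mem_DyckS_succ hj (Fin.init g) (g (Fin.last i))).mp
      (by rwa [Fin.snoc_init_self])
    rw [Finset.mem_union]
    cases hb : g (Fin.last i) <;> rw [hb] at h
    · right; simpa [dstp, sub_neg_eq_add] using h
    · left; simpa [dstp] using h
  · intro g1 h1 g2 h2 heq
    rw [mem_DyckS] at h1 h2
    have t1 : DyckT (Fin.init g1) + dstp (g1 (Fin.last i)) = j := by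
      rw [← DyckT_snoc, Fin.snoc_init_self]; exact h1.2
    have t2 : DyckT (Fin.init g2) + dstp (g2 (Fin.last i)) = j := by
      rw [← DyckT_snoc, Fin.snoc_init_self]; exact h2.2
    rw [heq] at t1
    have hd : dstp (g1 (Fin.last i)) = dstp (g2 (Fin.last i)) := by omega
    have hb : g1 (Fin.last i) = g2 (Fin.last i) := by
      cases h : g1 (Fin.last i) <;> cases h' : g2 (Fin.last i) <;>
        rw [h, h'] at hd <;> simp [dstp] at hd
    calc g1 = Fin.snoc (Fin.init g1) (g1 (Fin.last i)) := (Fin.snoc_init_self g1).symm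
    _ = Fin.snoc (Fin.init g2) (g2 (Fin.last i)) := by rw [heq, hb]
    _ = g2 := Fin.snoc_init_self g2
  · intro f hf
    rw [Finset.mem_union] at hf
    cases hf with
    | inl h =>
      refine ⟨Fin.snoc f true, ?_, (Fin.init_snoc _ _)⟩
      exact (mem_DyckS_succ hj f true).mpr (by simpa [dstp] using h)
    | inr h =>
      refine ⟨Fin.snoc f false, ?_, (Fin.init_snoc _ _)⟩
      exact (mem_DyckS_succ hj f false).mpr (by simpa [dstp, sub_neg_eq_add] using h)

lemma DyckP_last {i : ℕ} (f : Fin (i+1) → Bool) :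
    DyckP f (Fin.last i) = DyckT f := by
  unfold DyckP DyckT
  congr 1
  apply Finset.filter_true_of_mem
  intro x _
  exact Fin.le_last x

lemma DyckS_zero (j : ℤ) : (DyckS 0 j).card = if j = 0 then 1 else 0 := by
  by_cases h : j = 0
  · subst h
    rw [if_pos rfl]
    have : DyckS 0 0 = Finset.univ := by
      apply Finset.eq_univ_of_forall
      intro f
      rw [mem_DyckS]
      exact ⟨fun m => m.elim0, by simp [DyckT]⟩
    rw [this]
    simp
  · rw [if_neg h]
    rw [Finset.card_eq_zero]
    rw [Finset.eq_empty_iff_forall_notMem]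
    intro f hf
    rw [mem_DyckS] at hf
    have : DyckT f = 0 := by simp [DyckT]
    omega

lemma DyckS_neg {i : ℕ} {j : ℤ} (hj : j < 0) : DyckS (i+1) j = ∅ := by
  rw [Finset.eq_empty_iff_forall_notMem]
  intro f hf
  rw [mem_DyckS] at hf
  have := hf.1 (Fin.last i)
  rw [DyckP_last, hf.2] at this
  omega

lemma d_eq_card (i j : ℕ) : d i j = (DyckS i (j : ℤ)).card := by
  rw [← Nat.card_eq_finsetCard]
  apply Nat.card_congr
  refine ⟨fun s => ⟨fun m => decide (s.1 m = 1), ?_⟩, fun f => ⟨fun m => dstp (f.1 m), ?_⟩, ?_, ?_⟩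
  · obtain ⟨s, h1, h2, h3⟩ := s
    have key : ∀ m, dstp (decide (s m = 1)) = s m := by
      intro m
      rcases h1 m with h | h <;> simp [h, dstp]
    rw [mem_DyckS]
    constructor
    · intro m
      have hq : DyckP (fun m => decide (s m = 1)) m
          = ∑ r ∈ Finset.univ.filter (· ≤ m), s r :=
        Finset.sum_congr rfl fun r _ => key r
      rw [hq]
      exact h2 m
    · have hq : DyckT (fun m => decide (s m = 1)) = ∑ r, s r :=
        Finset.sum_congr rfl fun r _ => key r
      rw [hq]
      exact h3
  · obtain ⟨f, hf⟩ := f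
    rw [mem_DyckS] at hf
    refine ⟨fun m => by cases h : f m <;> simp [dstp, h], fun m => hf.1 m, hf.2⟩
  · rintro ⟨s, h1, h2, h3⟩
    ext m
    rcases h1 m with h | h <;> simp [h, dstp]
  · rintro ⟨f, hf⟩
    ext m
    cases h : f m <;> simp [dstp, h]


def cc (i : ℕ) (m : ℤ) : ℤ := if 0 ≤ m then (i.choose m.toNat : ℤ) else 0

lemma cc_succ (i : ℕ) (m : ℤ) : cc (i+1) m = cc i m + cc i (m-1) := by
  unfold cc
  split_ifs with h1 h2 h3
  · obtain ⟨t, ht⟩ : ∃ t : ℕ, m.toNat = t + 1 := ⟨(m-1).toNat, by omega⟩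
    rw [ht, show (m-1).toNat = t by omega, Nat.choose_succ_succ]
    push_cast; ring
  · rw [show m.toNat = 0 by omega]
    simp
  · omega
  · simp

lemma choose_symm_half (k : ℕ) (hk : 1 ≤ k) :
    (2*k-1).choose k = (2*k-1).choose (k-1) := by
  have h := Nat.choose_symm (show k ≤ 2*k-1 by omega)
  rw [show 2*k-1-k = k-1 by omega] at h
  exact h.symm

lemma cc_symm_half {K : ℤ} (i : ℕ) (hK1 : 1 ≤ K) (hi : (i:ℤ) = 2*K - 1) :
    cc i K = cc i (K-1) := by
  unfold cc
  rw [if_pos (by omega), if_pos (by omega)]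
  norm_cast
  have hi' : i = 2 * K.toNat - 1 := by omega
  rw [hi', show (K-1).toNat = K.toNat - 1 by omega]
  exact choose_symm_half K.toNat (by omega)

def FF (i : ℕ) (j : ℤ) : ℤ :=
  if 0 ≤ j ∧ j ≤ i ∧ 2 ∣ ((i : ℤ) - j) then
    cc i (((i : ℤ) - j)/2) - cc i (((i : ℤ) - j)/2 - 1)
  else 0

lemma FF_rec (i : ℕ) {j : ℤ} (hj : 0 ≤ j) :
    FF (i+1) j = FF i (j-1) + FF i (j+1) := by
  unfold FF
  push_cast
  by_cases hpar : 2 ∣ ((i:ℤ) + 1 - j)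
  · by_cases hle : j ≤ (i:ℤ) + 1
    · obtain ⟨K, hK⟩ := hpar
      by_cases htop : j = (i:ℤ) + 1
      · -- K = 0
        rw [if_pos (by omega), if_pos (by omega), if_neg (by omega)]
        rw [show ((i:ℤ)+1-j)/2 = 0 by omega, show ((i:ℤ)-(j-1))/2 = 0 by omega]
        simp [cc]
      · have hji : j ≤ (i:ℤ) - 1 := by omega
        by_cases hj0 : j = 0
        · -- boundary case j = 0, uses symmetry
          subst hj0
          have hK1 : 1 ≤ K := by omega
          rw [if_pos (by omega), if_neg (by omega), if_pos (by omega)]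
          rw [show ((i:ℤ)+1-0)/2 = K by omega, show ((i:ℤ)-(0+1))/2 = K - 1 by omega]
          rw [cc_succ, cc_succ, cc_symm_half i hK1 (by omega)]
          ring
        · -- interior case
          rw [if_pos (by omega), if_pos (by omega), if_pos (by omega)]
          rw [show ((i:ℤ)+1-j)/2 = K by omega, show ((i:ℤ)-(j-1))/2 = K by omega,
              show ((i:ℤ)-(j+1))/2 = K - 1 by omega]
          rw [cc_succ, cc_succ]
          ring
    · rw [if_neg (by omega), if_neg (by omega), if_neg (by omega)]
      ring
  · rw [if_neg (by omega), if_neg (by omega), if_neg (by omega)]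
    ring


lemma card_DyckS_eq (i : ℕ) : ∀ j : ℤ, ((DyckS i j).card : ℤ) = FF i j := by
  induction i with
  | zero =>
    intro j
    rw [DyckS_zero]
    unfold FF
    by_cases h : j = 0
    · subst h
      rw [if_pos rfl, if_pos (by norm_num)]
      norm_num
      simp [cc]
    · rw [if_neg h, if_neg (by push_cast; omega)]
      simp
  | succ i ih =>
    intro j
    by_cases hj : 0 ≤ j
    · rw [card_DyckS_succ i hj]
      push_cast
      rw [ih, ih, FF_rec i hj]
    · rw [DyckS_neg (by omega)]
      unfold FF
      rw [if_neg (by omega)]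
      simp

/-- For `j ≤ i` and `k = (i - j)/2` (so `i = j + 2k`), the Dyck triangle label satisfies
`d(i, j) = C(i, k) - C(i, k-1)`, with `C(i, -1) = 0`. -/
theorem dyck_label_eq_binomial_diff (i j k : ℕ) (hj : j ≤ i) (hk : i = j + 2 * k) :
    (d i j : ℤ) = (i.choose k : ℤ) - if k = 0 then 0 else (i.choose (k - 1) : ℤ) := by
  rw [d_eq_card, card_DyckS_eq]
  unfold FF
  split_ifs with hc h0 h0
  · -- hc true, k = 0
    subst h0
    rw [show ((i:ℤ) - (j:ℤ))/2 = 0 by omega]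
    norm_num [cc]
  · -- hc true, k ≠ 0
    rw [show ((i:ℤ) - (j:ℤ))/2 = (k:ℤ) by omega]
    have h1 : cc i (k:ℤ) = (i.choose k : ℤ) := by
      unfold cc
      rw [if_pos (by omega)]
      norm_num
    have h2 : cc i ((k:ℤ) - 1) = (i.choose (k-1) : ℤ) := by
      unfold cc
      rw [if_pos (by omega), show ((k:ℤ)-1).toNat = k - 1 by omega]
    rw [h1, h2]
  · exact absurd ⟨by omega, by omega, by omega⟩ hc
  · exact absurd ⟨by omega, by omega, by omega⟩ hc
end

section
/- For every natural number n \geq 1, \binom{n}{\lfloor n/2 \rfloor} - \binom{n}{\lfloor n/2 \rfloor - 1} = C_{\lceil n/2 \rceil}, i.e. the last Dyck square term t_{n, \lfloor n/2 \rfloor} in the decomposition of C_n equals the Catalan number with index \lceil n/2 \rceil. -/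
lemma even_case (k : ℕ) :
    ((2 * (k + 1)).choose (k + 1) : ℤ) - (2 * (k + 1)).choose k = catalan (k + 1) := by
  set m := k + 1 with hmk
  have h1 : (2 * m).choose m * m = (2 * m).choose k * (m + 1) := by
    have := Nat.choose_succ_right_eq (2 * m) k
    rw [hmk, this]
    congr 1
    omega
  have h2 : (m + 1) * catalan m = (2 * m).choose m := by
    rw [succ_mul_catalan_eq_centralBinom, Nat.centralBinom_eq_two_mul_choose]
  have h1' : ((2 * m).choose m : ℤ) * m = (2 * m).choose k * (m + 1) := by
    exact_mod_cast h1
  have h2' : ((m : ℤ) + 1) * catalan m = (2 * m).choose m := by exact_mod_cast h2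
  have hpos : ((m : ℤ) + 1) ≠ 0 := by positivity
  apply mul_left_cancel₀ hpos
  linear_combination h1' - h2'

lemma odd_case (k : ℕ) :
    ((2 * (k + 1) + 1).choose (k + 1) : ℤ) - (2 * (k + 1) + 1).choose k
      = catalan (k + 2) := by
  set m := k + 1 with hmk
  have h1 : (2 * m + 1).choose m * m = (2 * m + 1).choose k * (m + 2) := by
    have := Nat.choose_succ_right_eq (2 * m + 1) k
    rw [hmk, this]
    congr 1
    omega
  have h2 : (m + 2) * catalan (m + 1) = 2 * (2 * m + 1).choose m := by
    rw [succ_mul_catalan_eq_centralBinom, Nat.centralBinom_eq_two_mul_choose]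
    have h : 2 * (m + 1) = (2 * m + 1) + 1 := by ring
    rw [h, Nat.choose_succ_succ (2 * m + 1) m, Nat.choose_symm_half]
    ring
  have h1' : ((2 * m + 1).choose m : ℤ) * m = (2 * m + 1).choose k * (m + 2) := by
    exact_mod_cast h1
  have h2' : ((m : ℤ) + 2) * catalan (m + 1) = 2 * (2 * m + 1).choose m := by
    exact_mod_cast h2
  have hpos : ((m : ℤ) + 2) ≠ 0 := by positivity
  apply mul_left_cancel₀ hpos
  linear_combination h1' - h2'

/-- For `n ≥ 1`, the last Dyck square term `C(n, ⌊n/2⌋) - C(n, ⌊n/2⌋ - 1)` (with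
`C(n, -1) = 0`) equals the Catalan number `C_{⌈n/2⌉}`. -/
theorem last_dyck_square_eq_catalan (n : ℕ) (hn : 1 ≤ n) :
    (n.choose (n / 2) : ℤ)
        - (if n / 2 = 0 then 0 else (n.choose (n / 2 - 1) : ℤ)) =
      catalan ((n + 1) / 2) := by
  rcases Nat.even_or_odd n with ⟨m, hm⟩ | ⟨m, hm⟩
  · obtain ⟨k, rfl⟩ : ∃ k, m = k + 1 := ⟨m - 1, by omega⟩
    subst hm
    rw [if_neg (by omega)]
    have h2 : (k + 1 + (k + 1)) / 2 = k + 1 := by omega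
    have h3 : (k + 1 + (k + 1) + 1) / 2 = k + 1 := by omega
    have h4 : k + 1 - 1 = k := rfl
    rw [h2, h3, h4]
    have := even_case k
    rw [show 2 * (k + 1) = k + 1 + (k + 1) by ring] at this
    exact this
  · subst hm
    rcases Nat.eq_zero_or_pos m with rfl | hm1
    · norm_num
    · obtain ⟨k, rfl⟩ : ∃ k, m = k + 1 := ⟨m - 1, by omega⟩
      rw [if_neg (by omega)]
      have h2 : (2 * (k + 1) + 1) / 2 = k + 1 := by omega
      have h3 : (2 * (k + 1) + 1 + 1) / 2 = k + 2 := by omega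
      have h4 : k + 1 - 1 = k := rfl
      rw [h2, h3, h4]
      exact odd_case k
end
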